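/- arXiv:2005.10728 — 10 statements merged into one kernel-verified Lean document; each statement's English description precedes it below -/
import Mathlib

section
/- Let a, b > 0 and 0 < γ < 1. If f : ℕ → ℝ satisfies f(0) = 1 and, for all m ≥ 1, ∑_{k=1}^{m} f(m-k)·(1-γ)^k = f(m)·(a + m·b), then for all m ≥ 1, f(m) = ((1-γ)^m / (a+b)) · ∏_{i=2}^{m} (1 + a + (i-1)b) / (a + i·b). -/
/-!
Writing `S m` for the left-hand side of the recursion, shifting the summation index gives
`S (m + 1) = (1 - γ) (f m + S m)`. Hence the recursions at `m` and `m + 1` combine into the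
first-order recurrence `f (m + 1) (a + (m + 1) b) = (1 - γ) f m (1 + a + m b)`, which telescopes
into the product, starting from `f 1 = (1 - γ) / (a + b)`.
-/

open Finset

theorem sum_Icc_sub_mul_pow_succ {R : Type*} [CommSemiring R] (f : ℕ → R) (r : R) (m : ℕ) :
    ∑ k ∈ Icc 1 (m + 1), f (m + 1 - k) * r ^ k =
      r * (f m + ∑ k ∈ Icc 1 m, f (m - k) * r ^ k) := by
  simp only [← Ico_add_one_right_eq_Icc, sum_Ico_eq_sum_range, Nat.add_sub_cancel]
  rw [sum_range_succ', mul_add, mul_sum, add_comm]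
  congr 1
  · simp [mul_comm]
  · refine sum_congr rfl fun k _ => ?_
    rw [show m + 1 - (1 + (k + 1)) = m - (1 + k) by omega, ← add_assoc, pow_succ]
    ring

theorem eq_mul_prod_Icc_of_succ_eq_mul {M : Type*} [CommMonoid M] (u q : ℕ → M)
    (h : ∀ n, 1 ≤ n → u (n + 1) = q (n + 1) * u n) :
    ∀ m, 1 ≤ m → u m = u 1 * ∏ i ∈ Icc 2 m, q i := by
  intro m hm
  induction m, hm using Nat.le_induction with
  | base => simp
  | succ n hn ih => rw [prod_Icc_succ_top (by omega), h n hn, ih, mul_comm (q _), mul_assoc]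

theorem stmt_0_general (a b γ : ℝ) (ha : 0 < a) (hb : 0 < b)
    (f : ℕ → ℝ) (hf0 : f 0 = 1)
    (hrec : ∀ m : ℕ, 1 ≤ m →
      ∑ k ∈ Finset.Icc 1 m, f (m - k) * (1 - γ) ^ k = f m * (a + (m : ℝ) * b)) :
    ∀ m : ℕ, 1 ≤ m →
      f m = (1 - γ) ^ m / (a + b) *
        ∏ i ∈ Finset.Icc 2 m, (1 + a + ((i : ℝ) - 1) * b) / (a + (i : ℝ) * b) := by
  set x : ℕ → ℝ := fun i => (1 + a + ((i : ℝ) - 1) * b) / (a + (i : ℝ) * b)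
  have hpos (n : ℕ) : 0 < a + ((n : ℝ) + 1) * b := by positivity
  have hf1 : f 1 = (1 - γ) / (a + b) := by
    have h := hrec 1 le_rfl
    simp only [Icc_self, sum_singleton, Nat.sub_self, hf0, pow_one, one_mul, Nat.cast_one] at h
    rw [eq_div_iff (by simpa using (hpos 0).ne'), h]
  have hstep (n : ℕ) (hn : 1 ≤ n) : f (n + 1) = (1 - γ) * x (n + 1) * f n := by
    have h := hrec (n + 1) (by omega)
    rw [sum_Icc_sub_mul_pow_succ, hrec n hn] at h
    push_cast at h
    simp only [x, Nat.cast_add, Nat.cast_one, add_sub_cancel_right]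
    rw [mul_div_assoc', div_mul_eq_mul_div, eq_div_iff (hpos n).ne']
    linear_combination -h
  intro m hm
  obtain ⟨k, rfl⟩ := Nat.exists_eq_add_of_le' hm
  rw [eq_mul_prod_Icc_of_succ_eq_mul f (fun i => (1 - γ) * x i) hstep (k + 1) hm, hf1,
    prod_mul_distrib, prod_const, Nat.card_Icc, show k + 1 + 1 - 2 = k by omega, pow_succ']
  ring

theorem stmt_0 (a b γ : ℝ) (ha : 0 < a) (hb : 0 < b) (hγ0 : 0 < γ) (hγ1 : γ < 1)
    (f : ℕ → ℝ) (hf0 : f 0 = 1)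
    (hrec : ∀ m : ℕ, 1 ≤ m →
      ∑ k ∈ Finset.Icc 1 m, f (m - k) * (1 - γ) ^ k = f m * (a + (m : ℝ) * b)) :
    ∀ m : ℕ, 1 ≤ m →
      f m = (1 - γ) ^ m / (a + b) *
        ∏ i ∈ Finset.Icc 2 m, (1 + a + ((i : ℝ) - 1) * b) / (a + (i : ℝ) * b) :=
  stmt_0_general a b γ ha hb f hf0 hrec
end

section
/- Let λ₁, λ₂, μ₁, μ₂, θ_s > 0 and set γ_s = λ₁/(λ₁+λ₂). For m, n ≥ 1 the two expressions (μ₁/(μ₁+μ₂+m·θ_s)) · ∏_{i=1}^{m} λ₂/(μ₂+i·θ_s) · ∏_{i=1}^{n} (λ₁+λ₂)/(μ₁+μ₂+m·θ_s+i·θ_s) and ∏_{i=1}^{m+n} (λ₁+λ₂)/(μ₁+μ₂+i·θ_s) · ∏_{i=1}^{m} ((μ₁ + μ₂·[i>1] + (i-1)·θ_s)·(1-γ_s))/(μ₂+i·θ_s) are equal, where [i>1] equals 1 if i > 1 and 0 otherwise. -/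
/-!
Since `(λ₁ + λ₂)(1 - γ_s) = λ₂`, the right-hand side is the left-hand side after two regroupings:
the `(m + n)`-product splits at `m`, and in `∏_{i ≤ m} (μ₁ + μ₂[i > 1] + (i - 1)θ_s) / (μ₁ + μ₂ + iθ_s)`
each numerator but the first is the previous denominator, so the product telescopes to
`μ₁ / (μ₁ + μ₂ + mθ_s)`.
-/

open Finset

theorem prod_Icc_one_add {M : Type*} [CommMonoid M] (f : ℕ → M) (m n : ℕ) :
    ∏ i ∈ Icc 1 (m + n), f i = (∏ i ∈ Icc 1 m, f i) * ∏ i ∈ Icc 1 n, f (m + i) := by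
  induction n with
  | zero => simp
  | succ n ih =>
    rw [← add_assoc, prod_Icc_succ_top (by omega), ih, prod_Icc_succ_top (by omega), mul_assoc,
      add_assoc]

theorem prod_Icc_div_telescope {K : Type*} [Field K] (c : K) (d : ℕ → K) {m : ℕ} (hm : 1 ≤ m)
    (hd : ∀ i, 1 ≤ i → i < m → d i ≠ 0) :
    ∏ i ∈ Icc 1 m, (if 1 < i then d (i - 1) else c) / d i = c / d m := by
  induction m, hm using Nat.le_induction with
  | base => simp
  | succ k hk ih =>
    rw [prod_Icc_succ_top (by omega), ih fun i hi hik => hd i hi (by omega),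
      if_pos (by omega), Nat.add_sub_cancel, div_mul_div_cancel₀ (hd k hk k.lt_succ_self)]

theorem prod_div_mul_prod_mul_div {ι K : Type*} [Field K] (s : Finset ι) (c d e : ι → K)
    {a t b : K} (hb : a * t = b) :
    (∏ i ∈ s, a / d i) * ∏ i ∈ s, c i * t / e i = (∏ i ∈ s, b / e i) * ∏ i ∈ s, c i / d i := by
  rw [← hb, ← prod_mul_distrib, ← prod_mul_distrib]
  exact prod_congr rfl fun i _ => by ring

theorem stmt_2 (l1 l2 m1 m2 θ : ℝ) (hl1 : 0 < l1) (hl2 : 0 < l2) (hm1 : 0 < m1)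
    (hm2 : 0 < m2) (hθ : 0 < θ) (γ : ℝ) (hγ : γ = l1 / (l1 + l2)) :
    ∀ m n : ℕ, 1 ≤ m → 1 ≤ n →
      (m1 / (m1 + m2 + (m : ℝ) * θ)) *
        (∏ i ∈ Finset.Icc 1 m, l2 / (m2 + (i : ℝ) * θ)) *
        (∏ i ∈ Finset.Icc 1 n, (l1 + l2) / (m1 + m2 + (m : ℝ) * θ + (i : ℝ) * θ)) =
      (∏ i ∈ Finset.Icc 1 (m + n), (l1 + l2) / (m1 + m2 + (i : ℝ) * θ)) *
        (∏ i ∈ Finset.Icc 1 m,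
          ((m1 + (if 1 < i then m2 else 0) + ((i : ℝ) - 1) * θ) * (1 - γ)) /
            (m2 + (i : ℝ) * θ)) := by
  intro m n hm _
  have hl2_eq : (l1 + l2) * (1 - γ) = l2 := by
    rw [hγ]
    field_simp
    ring
  have split : ∏ i ∈ Icc 1 (m + n), (l1 + l2) / (m1 + m2 + (i : ℝ) * θ) =
      (∏ i ∈ Icc 1 m, (l1 + l2) / (m1 + m2 + (i : ℝ) * θ)) *
        ∏ i ∈ Icc 1 n, (l1 + l2) / (m1 + m2 + (m : ℝ) * θ + (i : ℝ) * θ) := by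
    rw [prod_Icc_one_add]
    congr! 3 with i
    push_cast
    ring
  have telescope : ∏ i ∈ Icc 1 m,
      (m1 + (if 1 < i then m2 else 0) + ((i : ℝ) - 1) * θ) / (m1 + m2 + (i : ℝ) * θ) =
        m1 / (m1 + m2 + (m : ℝ) * θ) := by
    rw [← prod_Icc_div_telescope m1 (fun i : ℕ => m1 + m2 + (i : ℝ) * θ) hm
      fun i _ _ => by positivity]
    refine prod_congr rfl fun i hi => ?_
    split_ifs with h
    · rw [Nat.cast_sub (by omega)]
      push_cast
      ring
    · obtain rfl : i = 1 := by grind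
      simp
  rw [split, mul_right_comm (∏ i ∈ Icc 1 m, (l1 + l2) / _),
    prod_div_mul_prod_mul_div _ _ _ _ hl2_eq, telescope]
  ring
end

section
/- Let λ₁, λ₂, μ₁, μ₂ > 0 with λ₁+λ₂ < μ₁+μ₂ and λ₂ < μ₂. Set x = λ₂/μ₂, y = (λ₁+λ₂)/(μ₁+μ₂), C = μ₁/(μ₁+μ₂), γ_s = λ₁/(λ₁+λ₂), and define π_{m,n} = C·x^m·y^n for m ≥ 1 and π_{0,n} = y^n. Then for all m ≥ 1 and n ≥ 0, ∑_{k=0}^{m} π_{m-k, n+k+1} · μ₁ · γ_s · (1-γ_s)^k = C·λ₁·y^n·x^m. -/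
/-!
Both facts that drive the identity are rational identities in the rates: `μ₁ γ y = C λ₁`, and
`C x = x - z` with `z = y (1 - γ)`. The first turns the sum into `C λ₁ yⁿ (∑_{k<m} C x^(m-k) zᵏ + zᵐ)`;
the second makes `C x^(m-k) zᵏ = x^(m-k) zᵏ - x^(m-k-1) z^(k+1)`, so the sum telescopes to `xᵐ`.
-/

open Finset

theorem sum_range_mul_pow_mul_pow_of_mul_eq_sub {R : Type*} [CommRing R] {C x z : R}
    (h : C * x = x - z) (m : ℕ) :
    ∑ k ∈ range m, C * x ^ (m - k) * z ^ k = x ^ m - z ^ m := by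
  calc ∑ k ∈ range m, C * x ^ (m - k) * z ^ k
      = (∑ k ∈ range m, x ^ k * z ^ (m - 1 - k)) * (C * x) := by
        rw [geom_sum₂_comm, sum_mul]
        refine sum_congr rfl fun k hk => ?_
        rw [show m - k = m - 1 - k + 1 by grind, pow_succ]
        ring
    _ = x ^ m - z ^ m := by rw [h, geom_sum₂_mul]

theorem stmt_3_general (l1 l2 m1 m2 : ℝ) (hl1 : 0 < l1) (hl2 : 0 < l2) (hm1 : 0 < m1)
    (hm2 : 0 < m2)
    (x y C γ : ℝ) (hx : x = l2 / m2) (hy : y = (l1 + l2) / (m1 + m2))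
    (hC : C = m1 / (m1 + m2)) (hγ : γ = l1 / (l1 + l2))
    (π : ℕ → ℕ → ℝ)
    (hπ : ∀ m n : ℕ, π m n = if m = 0 then y ^ n else C * x ^ m * y ^ n) :
    ∀ m n : ℕ, 1 ≤ m →
      ∑ k ∈ Finset.range (m + 1), π (m - k) (n + k + 1) * m1 * γ * (1 - γ) ^ k =
        C * l1 * y ^ n * x ^ m := by
  intro m n _
  have hrate : m1 * γ * y = C * l1 := by
    rw [hγ, hy, hC]
    field_simp
  have hCx : C * x = x - y * (1 - γ) := by
    rw [hγ, hy, hC, hx]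
    field_simp
    ring
  have hterm : ∀ k ∈ range m, π (m - k) (n + k + 1) * m1 * γ * (1 - γ) ^ k
      = C * l1 * y ^ n * (C * x ^ (m - k) * (y * (1 - γ)) ^ k) := fun k hk => by
    rw [hπ, if_neg (by grind), mul_pow]
    linear_combination (C * x ^ (m - k) * y ^ n * y ^ k * (1 - γ) ^ k) * hrate
  rw [sum_range_succ, sum_congr rfl hterm, ← mul_sum,
    sum_range_mul_pow_mul_pow_of_mul_eq_sub hCx, Nat.sub_self, hπ, if_pos rfl, mul_pow]
  linear_combination (y ^ n * y ^ m * (1 - γ) ^ m) * hrate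

theorem stmt_3 (l1 l2 m1 m2 : ℝ) (hl1 : 0 < l1) (hl2 : 0 < l2) (hm1 : 0 < m1)
    (hm2 : 0 < m2) (hstab1 : l1 + l2 < m1 + m2) (hstab2 : l2 < m2)
    (x y C γ : ℝ) (hx : x = l2 / m2) (hy : y = (l1 + l2) / (m1 + m2))
    (hC : C = m1 / (m1 + m2)) (hγ : γ = l1 / (l1 + l2))
    (π : ℕ → ℕ → ℝ)
    (hπ : ∀ m n : ℕ, π m n = if m = 0 then y ^ n else C * x ^ m * y ^ n) :
    ∀ m n : ℕ, 1 ≤ m →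
      ∑ k ∈ Finset.range (m + 1), π (m - k) (n + k + 1) * m1 * γ * (1 - γ) ^ k =
        C * l1 * y ^ n * x ^ m :=
  stmt_3_general l1 l2 m1 m2 hl1 hl2 hm1 hm2 x y C γ hx hy hC hγ π hπ
end

section
/- Let λ₁, λ₂, μ₁, μ₂ > 0 with λ₂ < μ₂ and λ₁+λ₂ < μ₁+μ₂. Set x = λ₂/μ₂, y = (λ₁+λ₂)/(μ₁+μ₂), C = μ₁/(μ₁+μ₂), γ_s = λ₁/(λ₁+λ₂), and define π_{m,n} = C·x^m·y^n for m ≥ 1, π_{0,n} = y^n. Then for all m ≥ 1, ∑_{k=1}^{m} π_{m-k,k} · μ₁ · (1-γ_s)^k = C·μ₂·x^m. -/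
/-! With `r = μ₂/(μ₁+μ₂)` one has `C = 1 - r` and `y (1 - γ_s) = r x`, so the `k`-th summand
is `μ₁ C r^k x^m` for `k < m` and `μ₁ r^m x^m` for `k = m`. The geometric sum
`(1 - r)(r + ⋯ + r^(m-1)) = r - r^m` then collapses the left side to `μ₁ r x^m = C μ₂ x^m`. -/

open Finset

theorem sum_Icc_productForm_mul_pow {R : Type*} [CommRing R] (C x y w r : R)
    (hC : C = 1 - r) (hyw : y * w = r * x) (π : ℕ → ℕ → R)
    (hπ : ∀ m n : ℕ, π m n = if m = 0 then y ^ n else C * x ^ m * y ^ n)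
    {m : ℕ} (hm : 1 ≤ m) :
    ∑ k ∈ Icc 1 m, π (m - k) k * w ^ k = r * x ^ m := by
  have hinner : ∀ k ∈ Ico 1 m, π (m - k) k * w ^ k = C * x ^ m * r ^ k := by
    intro k hk
    have hkm : k < m := (mem_Ico.mp hk).2
    rw [hπ, if_neg (Nat.sub_ne_zero_of_lt hkm), mul_assoc, ← mul_pow, hyw, mul_pow,
      ← pow_sub_mul_pow x hkm.le]
    ring
  have hlast : π (m - m) m * w ^ m = r ^ m * x ^ m := by
    rw [hπ, Nat.sub_self, if_pos rfl, ← mul_pow, hyw, mul_pow]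
  have hgeom : (∑ k ∈ Ico 1 m, r ^ k) * (1 - r) = r ^ 1 - r ^ m := geom_sum_Ico_mul_neg r hm
  rw [← Ico_add_one_right_eq_Icc, sum_Ico_succ_top (by omega), sum_congr rfl hinner, ← mul_sum,
    hlast, hC]
  linear_combination x ^ m * hgeom

theorem stmt_4_general (l1 l2 m1 m2 : ℝ) (hl1 : 0 < l1) (hl2 : 0 < l2) (hm1 : 0 < m1)
    (hm2 : 0 < m2)
    (x y C γ : ℝ) (hx : x = l2 / m2) (hy : y = (l1 + l2) / (m1 + m2))
    (hC : C = m1 / (m1 + m2)) (hγ : γ = l1 / (l1 + l2))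
    (π : ℕ → ℕ → ℝ)
    (hπ : ∀ m n : ℕ, π m n = if m = 0 then y ^ n else C * x ^ m * y ^ n) :
    ∀ m : ℕ, 1 ≤ m →
      ∑ k ∈ Finset.Icc 1 m, π (m - k) k * m1 * (1 - γ) ^ k = C * m2 * x ^ m := by
  intro m hm
  have hl : l1 + l2 ≠ 0 := by positivity
  have hμ : m1 + m2 ≠ 0 := by positivity
  have hCr : C = 1 - m2 / (m1 + m2) := by rw [hC]; field_simp; ring
  have hyw : y * (1 - γ) = m2 / (m1 + m2) * x := by rw [hy, hγ, hx]; field_simp; ring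
  calc ∑ k ∈ Icc 1 m, π (m - k) k * m1 * (1 - γ) ^ k
      = m1 * ∑ k ∈ Icc 1 m, π (m - k) k * (1 - γ) ^ k := by
        rw [mul_sum]; exact sum_congr rfl fun _ _ => by ring
    _ = m1 * (m2 / (m1 + m2) * x ^ m) := by
        rw [sum_Icc_productForm_mul_pow C x y (1 - γ) _ hCr hyw π hπ hm]
    _ = C * m2 * x ^ m := by rw [hC]; ring

theorem stmt_4 (l1 l2 m1 m2 : ℝ) (hl1 : 0 < l1) (hl2 : 0 < l2) (hm1 : 0 < m1)
    (hm2 : 0 < m2) (hstab2 : l2 < m2) (hstab1 : l1 + l2 < m1 + m2)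
    (x y C γ : ℝ) (hx : x = l2 / m2) (hy : y = (l1 + l2) / (m1 + m2))
    (hC : C = m1 / (m1 + m2)) (hγ : γ = l1 / (l1 + l2))
    (π : ℕ → ℕ → ℝ)
    (hπ : ∀ m n : ℕ, π m n = if m = 0 then y ^ n else C * x ^ m * y ^ n) :
    ∀ m : ℕ, 1 ≤ m →
      ∑ k ∈ Finset.Icc 1 m, π (m - k) k * m1 * (1 - γ) ^ k = C * m2 * x ^ m :=
  stmt_4_general l1 l2 m1 m2 hl1 hl2 hm1 hm2 x y C γ hx hy hC hγ π hπ
end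

section
/- Let λ₁, λ₂, μ₁, μ₂, θ_s > 0, γ_s = λ₁/(λ₁+λ₂). Define s_i = ((μ₁ + μ₂·[i>1] + (i-1)θ_s)·(1-γ_s))/(μ₂ + i·θ_s) and f(m) = ∏_{i=1}^{m} s_i with f(0) = 1. Then for all m ≥ 1, ∑_{k=1}^{m} f(m-k)·μ₁·(1-γ_s)^k = f(m)·(μ₂ + m·θ_s). -/
/-!
Write `S m` for the left-hand side and `D n = m2·[n > 0] + n θ`, so that `D m = m2 + m θ` for
`m ≥ 1`, `D 0 = 0`, and the `i`-th factor of `f` is `(m1 + D (i - 1)) (1 - γ) / D i`. Peeling off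
the `k = 1` term gives `S (m + 1) = (1 - γ) S m + f m m1 (1 - γ)`, while the product form gives
`f (m + 1) D (m + 1) = f m (m1 + D m) (1 - γ)`; so `S m = f m D m` by induction from `S 0 = 0`.
-/

open Finset

theorem sum_Icc_one_succ_sub_mul_pow {R : Type*} [CommSemiring R] (f : ℕ → R) (a c : R) (m : ℕ) :
    ∑ k ∈ Icc 1 (m + 1), f (m + 1 - k) * a * c ^ k =
      c * ∑ k ∈ Icc 1 m, f (m - k) * a * c ^ k + f m * a * c := by
  rw [← insert_Icc_add_one_left_eq_Icc (by omega : 1 ≤ m + 1), sum_insert (by simp),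
    ← map_add_right_Icc 1 m 1, sum_map, mul_sum, add_comm]
  congr 1
  · refine sum_congr rfl fun k _ => ?_
    simp only [addRightEmbedding_apply, Nat.add_sub_add_right, pow_succ]
    ring
  · simp

theorem sum_Icc_one_sub_mul_pow_eq {R : Type*} [CommSemiring R] (f D : ℕ → R) (a c : R)
    (hD : D 0 = 0) (hstep : ∀ n, f (n + 1) * D (n + 1) = f n * (a + D n) * c) (m : ℕ) :
    ∑ k ∈ Icc 1 m, f (m - k) * a * c ^ k = f m * D m := by
  induction m with
  | zero => simp [hD]
  | succ m ih => rw [sum_Icc_one_succ_sub_mul_pow, ih, hstep]; ring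

theorem stmt_5_general (m1 m2 θ : ℝ) (hm2 : 0 < m2) (hθ : 0 < θ) (γ : ℝ)
    (f : ℕ → ℝ)
    (hf : ∀ m : ℕ, f m = ∏ i ∈ Finset.Icc 1 m,
      ((m1 + (if 1 < i then m2 else 0) + ((i : ℝ) - 1) * θ) * (1 - γ)) /
        (m2 + (i : ℝ) * θ)) :
    ∀ m : ℕ, 1 ≤ m →
      ∑ k ∈ Finset.Icc 1 m, f (m - k) * m1 * (1 - γ) ^ k =
        f m * (m2 + (m : ℝ) * θ) := by
  intro m hm
  let D : ℕ → ℝ := fun n => (if 0 < n then m2 else 0) + n * θ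
  have hstep (n : ℕ) : f (n + 1) * D (n + 1) = f n * (m1 + D n) * (1 - γ) := by
    have hD_succ : D (n + 1) = m2 + ((n + 1 : ℕ) : ℝ) * θ := by simp [D]
    have hden : m2 + ((n + 1 : ℕ) : ℝ) * θ ≠ 0 := by positivity
    rw [hf (n + 1), prod_Icc_succ_top (by omega), ← hf n, hD_succ, mul_assoc,
      div_mul_cancel₀ _ hden]
    simp only [D, Nat.lt_add_left_iff_pos, Nat.cast_add, Nat.cast_one, add_sub_cancel_right]
    ring
  rw [sum_Icc_one_sub_mul_pow_eq f D m1 (1 - γ) (by simp [D]) hstep]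
  simp only [D, if_pos (by omega : 0 < m)]

theorem stmt_5 (l1 l2 m1 m2 θ : ℝ) (hl1 : 0 < l1) (hl2 : 0 < l2) (hm1 : 0 < m1)
    (hm2 : 0 < m2) (hθ : 0 < θ) (γ : ℝ) (hγ : γ = l1 / (l1 + l2))
    (f : ℕ → ℝ)
    (hf : ∀ m : ℕ, f m = ∏ i ∈ Finset.Icc 1 m,
      ((m1 + (if 1 < i then m2 else 0) + ((i : ℝ) - 1) * θ) * (1 - γ)) /
        (m2 + (i : ℝ) * θ)) :
    ∀ m : ℕ, 1 ≤ m →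
      ∑ k ∈ Finset.Icc 1 m, f (m - k) * m1 * (1 - γ) ^ k =
        f m * (m2 + (m : ℝ) * θ) :=
  stmt_5_general m1 m2 θ hm2 hθ γ f hf
end

section
/- Let λ₁, λ₂, μ₁, μ₂, θ_s > 0, γ_s = λ₁/(λ₁+λ₂), and let P_m = ∏_{i=1}^{m} (λ₁+λ₂)/(μ₁+μ₂+i·θ_s) and S_m = ∏_{i=1}^{m} ((μ₁ + μ₂·[i>1] + (i-1)θ_s)(1-γ_s))/(μ₂+i·θ_s). Then for all m ≥ 1, P_m · S_m · (μ₁ + μ₂ + m·θ_s) = μ₁ · ∏_{i=1}^{m} λ₂/(μ₂ + i·θ_s). -/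
/-!
Since `1 - γ = λ₂ / (λ₁ + λ₂)`, the factors `λ₁ + λ₂` cancel and `P_m S_m` splits as
`∏ λ₂ / (μ₂ + iθ)` times `∏ N_i / D_i` with `D_i = μ₁ + μ₂ + iθ`. The numerator `N_i` is `μ₁`
for `i = 1` and `D_{i-1}` afterwards, so the second product telescopes to `μ₁ / D_m`.
-/

open Finset

theorem prod_Icc_div_telescope_s6 {K : Type*} [Field K] {f g : ℕ → K}
    (hg : ∀ i, 1 ≤ i → g (i + 1) = f i) (hf : ∀ i, 1 ≤ i → f i ≠ 0) :
    ∀ m, 1 ≤ m → ∏ i ∈ Icc 1 m, g i / f i = g 1 / f m := by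
  intro m hm
  induction m, hm using Nat.le_induction with
  | base => simp
  | succ n hn ih =>
    rw [prod_Icc_succ_top (by omega), ih, hg n hn, div_mul_div_cancel₀ (hf n hn)]

theorem stmt_6 (l1 l2 m1 m2 θ : ℝ) (hl1 : 0 < l1) (hl2 : 0 < l2) (hm1 : 0 < m1)
    (hm2 : 0 < m2) (hθ : 0 < θ) (γ : ℝ) (hγ : γ = l1 / (l1 + l2)) :
    ∀ m : ℕ, 1 ≤ m →
      (∏ i ∈ Finset.Icc 1 m, (l1 + l2) / (m1 + m2 + (i : ℝ) * θ)) *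
        (∏ i ∈ Finset.Icc 1 m,
          ((m1 + (if 1 < i then m2 else 0) + ((i : ℝ) - 1) * θ) * (1 - γ)) /
            (m2 + (i : ℝ) * θ)) *
        (m1 + m2 + (m : ℝ) * θ) =
      m1 * ∏ i ∈ Finset.Icc 1 m, l2 / (m2 + (i : ℝ) * θ) := by
  intro m hm
  set D : ℕ → ℝ := fun i ↦ m1 + m2 + (i : ℝ) * θ
  set N : ℕ → ℝ := fun i ↦ m1 + (if 1 < i then m2 else 0) + ((i : ℝ) - 1) * θ
  have hD : ∀ i, 1 ≤ i → D i ≠ 0 := fun i _ ↦ by positivity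
  have hN₁ : N 1 = m1 := by simp [N]
  have hN : ∀ i, 1 ≤ i → N (i + 1) = D i := fun i hi ↦ by
    simp only [N, D, if_pos (Nat.lt_succ_of_le hi)]; push_cast; ring
  have hγ' : 1 - γ = l2 / (l1 + l2) := by rw [hγ]; field_simp; ring
  have hsplit : ∀ i ∈ Icc 1 m, (l1 + l2) / D i * (N i * (1 - γ) / (m2 + i * θ)) =
      l2 / (m2 + i * θ) * (N i / D i) := fun i _ ↦ by
    rw [hγ']; field_simp
  rw [← prod_mul_distrib, prod_congr rfl hsplit, prod_mul_distrib,
    prod_Icc_div_telescope_s6 hN hD m hm, hN₁, mul_assoc, div_mul_cancel₀ _ (hD m hm), mul_comm]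
end

section
/- Let λ₁, λ₂, μ₁, μ₂, θ_s, θ_d > 0 and define q_{i,j} = (∏_{k=1}^{i} λ₂/(μ₂+k·θ_s)) · (∏_{k=1}^{j} μ₁/(λ₁+k·θ_d)) for i,j ≥ 1. Then for all i ≥ 2 and j ≥ 2, q_{i,j}·(i·θ_s + j·θ_d + μ₁+μ₂+λ₁+λ₂) = q_{i+1,j}·((i+1)·θ_s + μ₂) + q_{i-1,j}·λ₂ + q_{i,j+1}·((j+1)·θ_d + λ₁) + q_{i,j-1}·μ₁. -/
theorem stmt_9 (l1 l2 m1 m2 θs θd : ℝ) (hl1 : 0 < l1) (hl2 : 0 < l2) (hm1 : 0 < m1)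
    (hm2 : 0 < m2) (hθs : 0 < θs) (hθd : 0 < θd)
    (q : ℕ → ℕ → ℝ)
    (hq : ∀ i j : ℕ, q i j =
      (∏ k ∈ Finset.Icc 1 i, l2 / (m2 + (k : ℝ) * θs)) *
        (∏ k ∈ Finset.Icc 1 j, m1 / (l1 + (k : ℝ) * θd))) :
    ∀ i j : ℕ, 2 ≤ i → 2 ≤ j →
      q i j * ((i : ℝ) * θs + (j : ℝ) * θd + m1 + m2 + l1 + l2) =
        q (i + 1) j * (((i : ℝ) + 1) * θs + m2) + q (i - 1) j * l2 +
          q i (j + 1) * (((j : ℝ) + 1) * θd + l1) + q i (j - 1) * m1 := by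
  intro i j hi hj
  obtain ⟨a, rfl⟩ : ∃ a, i = a + 1 := ⟨i - 1, by omega⟩
  obtain ⟨b, rfl⟩ : ∃ b, j = b + 1 := ⟨j - 1, by omega⟩
  have hprod : ∀ n : ℕ, ∀ x y : ℝ, 0 < x → 0 < y →
      (∏ k ∈ Finset.Icc 1 (n + 1), x / (y + (k : ℝ) * θs)) =
        (∏ k ∈ Finset.Icc 1 n, x / (y + (k : ℝ) * θs)) * (x / (y + ((n : ℝ) + 1) * θs)) := by
    intro n x y hx hy
    rw [Finset.prod_Icc_succ_top (by omega)]
    push_cast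
    ring
  have hprod' : ∀ n : ℕ, ∀ x y : ℝ, 0 < x → 0 < y →
      (∏ k ∈ Finset.Icc 1 (n + 1), x / (y + (k : ℝ) * θd)) =
        (∏ k ∈ Finset.Icc 1 n, x / (y + (k : ℝ) * θd)) * (x / (y + ((n : ℝ) + 1) * θd)) := by
    intro n x y hx hy
    rw [Finset.prod_Icc_succ_top (by omega)]
    push_cast
    ring
  simp only [hq, Nat.add_sub_cancel]
  rw [hprod (a + 1) l2 m2 hl2 hm2, hprod a l2 m2 hl2 hm2,
      hprod' (b + 1) m1 l1 hm1 hl1, hprod' b m1 l1 hm1 hl1]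
  have d1 : m2 + ((a : ℝ) + 1) * θs ≠ 0 := by positivity
  have d2 : m2 + (((a : ℝ) + 1) + 1) * θs ≠ 0 := by positivity
  have d3 : l1 + ((b : ℝ) + 1) * θd ≠ 0 := by positivity
  have d4 : l1 + (((b : ℝ) + 1) + 1) * θd ≠ 0 := by positivity
  generalize (∏ k ∈ Finset.Icc 1 a, l2 / (m2 + (k : ℝ) * θs)) = P
  generalize (∏ k ∈ Finset.Icc 1 b, m1 / (l1 + (k : ℝ) * θd)) = Q
  push_cast
  field_simp
  ring
end

section
/- Let λ₁, λ₂, μ₁, μ₂, θ_s > 0, γ_s = λ₁/(λ₁+λ₂). Define f(0)=1 and f(m) = ∏_{i=1}^{m} ((μ₁+μ₂·[i>1]+(i-1)θ_s)(1-γ_s))/(μ₂+i·θ_s), g(n) = ∏_{i=1}^{n} (λ₁+λ₂)/(μ₁+μ₂+i·θ_s), and π_{m,n} = f(m)·g(m+n). Then for all m ≥ 1, π_{m,0}·(μ₂+λ₁+λ₂+m·θ_s) = π_{m,1}·θ_s + π_{m+1,0}·(μ₂+(m+1)·θ_s) + ∑_{k=0}^{m} π_{m-k,k+1}·μ₁·γ_s·(1-γ_s)^k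 + ∑_{k=1}^{m} π_{m-k,k}·μ₁·(1-γ_s)^k. -/
lemma aux_sum_Icc1 (n : ℕ) (F : ℕ → ℝ) :
    ∑ k ∈ Finset.Icc 1 n, F k = ∑ j ∈ Finset.range n, F (j + 1) := by
  rw [← Finset.Ico_add_one_right_eq_Icc, Finset.sum_Ico_eq_sum_range]
  simp [add_comm]

lemma aux_range_split (n : ℕ) (F : ℕ → ℝ) :
    ∑ k ∈ Finset.range (n + 1), F k = F 0 + ∑ k ∈ Finset.Icc 1 n, F k := by
  rw [aux_sum_Icc1, Finset.sum_range_succ']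
  ring

theorem stmt_13 (l1 l2 m1 m2 θ : ℝ) (hl1 : 0 < l1) (hl2 : 0 < l2) (hm1 : 0 < m1)
    (hm2 : 0 < m2) (hθ : 0 < θ) (γ : ℝ) (hγ : γ = l1 / (l1 + l2))
    (f g : ℕ → ℝ)
    (hf : ∀ m : ℕ, f m = ∏ i ∈ Finset.Icc 1 m,
      ((m1 + (if 1 < i then m2 else 0) + ((i : ℝ) - 1) * θ) * (1 - γ)) /
        (m2 + (i : ℝ) * θ))
    (hg : ∀ n : ℕ, g n = ∏ i ∈ Finset.Icc 1 n, (l1 + l2) / (m1 + m2 + (i : ℝ) * θ))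
    (π : ℕ → ℕ → ℝ) (hπ : ∀ m n : ℕ, π m n = f m * g (m + n)) :
    ∀ m : ℕ, 1 ≤ m →
      π m 0 * (m2 + l1 + l2 + (m : ℝ) * θ) =
        π m 1 * θ + π (m + 1) 0 * (m2 + ((m : ℝ) + 1) * θ) +
          (∑ k ∈ Finset.range (m + 1), π (m - k) (k + 1) * m1 * γ * (1 - γ) ^ k) +
          (∑ k ∈ Finset.Icc 1 m, π (m - k) k * m1 * (1 - γ) ^ k) := by
  have hf0 : f 0 = 1 := by simp [hf]
  have hfs : ∀ n : ℕ, 1 ≤ n →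
      f (n + 1) = f n * ((m1 + m2 + (n : ℝ) * θ) * (1 - γ)) / (m2 + ((n : ℝ) + 1) * θ) := by
    intro n hn
    rw [hf (n + 1), Finset.prod_Icc_succ_top (by omega), ← hf n]
    have h1 : (1 : ℕ) < n + 1 := by omega
    rw [if_pos h1]
    push_cast
    ring
  have hgs : ∀ n : ℕ, g (n + 1) = g n * ((l1 + l2) / (m1 + m2 + ((n : ℝ) + 1) * θ)) := by
    intro n
    rw [hg (n + 1), Finset.prod_Icc_succ_top (by omega), ← hg n]
    push_cast
    ring
  have key : ∀ n : ℕ, 1 ≤ n →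
      m1 * (∑ k ∈ Finset.Icc 1 n, f (n - k) * (1 - γ) ^ k) = f n * (m2 + (n : ℝ) * θ) := by
    intro n hn
    induction n, hn using Nat.le_induction with
    | base =>
      have hd : m2 + θ ≠ 0 := by positivity
      rw [hf 1]
      simp [hf0]
      field_simp
    | succ n hn ih =>
      have hd : m2 + ((n : ℝ) + 1) * θ ≠ 0 := by positivity
      have hstep : (∑ k ∈ Finset.Icc 1 (n + 1), f (n + 1 - k) * (1 - γ) ^ k)
          = (1 - γ) * (f n + ∑ k ∈ Finset.Icc 1 n, f (n - k) * (1 - γ) ^ k) := by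
        rw [aux_sum_Icc1 (n + 1) (fun k => f (n + 1 - k) * (1 - γ) ^ k)]
        have he : ∀ j, f (n + 1 - (j + 1)) * (1 - γ) ^ (j + 1)
            = (1 - γ) * (f (n - j) * (1 - γ) ^ j) := by
          intro j
          have : n + 1 - (j + 1) = n - j := by omega
          rw [this]; ring
        rw [Finset.sum_congr rfl (fun j _ => he j), ← Finset.mul_sum,
          aux_range_split n (fun j => f (n - j) * (1 - γ) ^ j)]
        simp
      have hrec : f (n + 1) * (m2 + ((n : ℝ) + 1) * θ)
          = (1 - γ) * f n * (m1 + m2 + (n : ℝ) * θ) := by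
        rw [hfs n hn]
        field_simp
      rw [hstep]
      push_cast
      rw [hrec]
      linear_combination (1 - γ) * ih
  intro m hm
  have hd2 : m1 + m2 + ((m : ℝ) + 1) * θ ≠ 0 := by positivity
  have hkey := key m hm
  have hrec : f (m + 1) * (m2 + ((m : ℝ) + 1) * θ)
      = (1 - γ) * f m * (m1 + m2 + (m : ℝ) * θ) := by
    have hd : m2 + ((m : ℝ) + 1) * θ ≠ 0 := by positivity
    rw [hfs m hm]
    field_simp
  have hg2 : g (m + 1) * (m1 + m2 + ((m : ℝ) + 1) * θ) = g m * (l1 + l2) := by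
    rw [hgs m]
    field_simp
  have sum2 : (∑ k ∈ Finset.Icc 1 m, π (m - k) k * m1 * (1 - γ) ^ k)
      = g m * (m1 * (∑ k ∈ Finset.Icc 1 m, f (m - k) * (1 - γ) ^ k)) := by
    rw [Finset.mul_sum, Finset.mul_sum]
    apply Finset.sum_congr rfl
    intro k hk
    have hk' : k ≤ m := (Finset.mem_Icc.mp hk).2
    rw [hπ]
    have : m - k + k = m := by omega
    rw [this]; ring
  have sum1 : (∑ k ∈ Finset.range (m + 1), π (m - k) (k + 1) * m1 * γ * (1 - γ) ^ k)
      = g (m + 1) * (γ * (m1 * f m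
          + m1 * (∑ k ∈ Finset.Icc 1 m, f (m - k) * (1 - γ) ^ k))) := by
    have e1 : (∑ k ∈ Finset.range (m + 1), π (m - k) (k + 1) * m1 * γ * (1 - γ) ^ k)
        = ∑ k ∈ Finset.range (m + 1), g (m + 1) * m1 * γ * (f (m - k) * (1 - γ) ^ k) := by
      apply Finset.sum_congr rfl
      intro k hk
      have hk' : k ≤ m := Nat.lt_succ_iff.mp (Finset.mem_range.mp hk)
      rw [hπ]
      have : m - k + (k + 1) = m + 1 := by omega
      rw [this]; ring
    rw [e1, ← Finset.mul_sum, aux_range_split m (fun k => f (m - k) * (1 - γ) ^ k)]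
    simp only [Nat.sub_zero, pow_zero, mul_one]
    ring
  rw [sum1, sum2, hkey, hπ, hπ, hπ]
  simp only [Nat.add_zero]
  push_cast
  linear_combination (-(g (m + 1))) * hrec + (-(f m)) * hg2
end

section
/- Let λ₁, λ₂, μ₁, μ₂, θ_s > 0, γ_s = λ₁/(λ₁+λ₂). Define f and g and π_{m,n} = f(m)·g(m+n) as in the product form of Theorem 1 (f(m) = ∏_{i=1}^{m} ((μ₁+μ₂·[i>1]+(i-1)θ_s)(1-γ_s))/(μ₂+iθ_s), g(n) = ∏_{i=1}^{n} (λ₁+λ₂)/(μ₁+μ₂+iθ_s)). Then for all m ≥ 1 and n ≥ 1, π_{m,n}·(μ₁+μ₂+λ₁+λ₂+(m+n)θ_s) = π_{m,n+1}·(n+1)·θ_s + π_{m+1,n}·(μ₂+(m+1)θ_s) + π_{m,n-1}·(λ₁+λ₂) + ∑_{k=0}^{m} π_{m-k,n+k+1}·μ₁·γ_s·(1-γ_s)^k. -/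
/-!
Both factors of `π m n = f m * g (m + n)` satisfy first-order recurrences, read off from the last
factor of their products. All terms of the reneging sum share the factor `g (m + n + 1)`, since
`(m - k) + (n + k + 1) = m + n + 1`, and what remains is `μ₁ ∑ₖ f (m - k) (1 - γ)ᵏ`, which by
induction on `m` equals `(μ₁ + μ₂ + m θ) f m`. Added to the term `π (m + 1) n`, whose recurrence
supplies the complementary factor `1 - γ`, this gives `g (m + n + 1) (μ₁ + μ₂ + m θ) f m`, and the
equation reduces to the recurrence of `g` at `m + n` and `m + n + 1`.
-/

open Finset

theorem prod_Icc_succ_div_mul {K : Type*} [Field K] (u v : ℕ → K) (p : ℕ) (hv : v (p + 1) ≠ 0) :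
    (∏ i ∈ Icc 1 (p + 1), u i / v i) * v (p + 1) = (∏ i ∈ Icc 1 p, u i / v i) * u (p + 1) := by
  rw [prod_Icc_succ_top (by omega), mul_assoc, div_mul_cancel₀ _ hv]

section GeomConv

variable {R : Type*}

def geomConv [CommSemiring R] (f : ℕ → R) (r : R) (p : ℕ) : R :=
  ∑ k ∈ range (p + 1), f (p - k) * r ^ k

theorem geomConv_succ [CommSemiring R] (f : ℕ → R) (r : R) (p : ℕ) :
    geomConv f r (p + 1) = r * geomConv f r p + f (p + 1) := by
  rw [geomConv, sum_range_succ', geomConv, mul_sum]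
  congr 1
  · refine sum_congr rfl fun k _ => ?_
    rw [Nat.add_sub_add_right, pow_succ]
    ring
  · simp

theorem mul_apply_eq_mul_geomConv [CommRing R] (f : ℕ → R) (r a b θ : R) (h0 : f 0 = 1)
    (h1 : f 1 * (b + θ) = a * r)
    (hsucc : ∀ p : ℕ, 1 ≤ p → f (p + 1) * (b + (p + 1) * θ) = f p * ((a + b + p * θ) * r))
    (p : ℕ) (hp : 1 ≤ p) : (a + b + p * θ) * f p = a * geomConv f r p := by
  induction p, hp using Nat.le_induction with
  | base =>
    rw [geomConv_succ, geomConv, Nat.cast_one]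
    simp only [zero_add, range_one, sum_singleton, Nat.sub_zero, h0, pow_zero, mul_one]
    linear_combination h1
  | succ p hp ih =>
    rw [geomConv_succ]
    push_cast
    linear_combination hsucc p hp + r * ih

end GeomConv

theorem stmt_14_general (l1 l2 m1 m2 θ : ℝ) (hm1 : 0 < m1)
    (hm2 : 0 < m2) (hθ : 0 < θ) (γ : ℝ)
    (f g : ℕ → ℝ)
    (hf : ∀ m : ℕ, f m = ∏ i ∈ Finset.Icc 1 m,
      ((m1 + (if 1 < i then m2 else 0) + ((i : ℝ) - 1) * θ) * (1 - γ)) /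
        (m2 + (i : ℝ) * θ))
    (hg : ∀ n : ℕ, g n = ∏ i ∈ Finset.Icc 1 n, (l1 + l2) / (m1 + m2 + (i : ℝ) * θ))
    (π : ℕ → ℕ → ℝ) (hπ : ∀ m n : ℕ, π m n = f m * g (m + n)) :
    ∀ m n : ℕ, 1 ≤ m → 1 ≤ n →
      π m n * (m1 + m2 + l1 + l2 + ((m : ℝ) + n) * θ) =
        π m (n + 1) * ((n : ℝ) + 1) * θ + π (m + 1) n * (m2 + ((m : ℝ) + 1) * θ) +
          π m (n - 1) * (l1 + l2) +
          ∑ k ∈ Finset.range (m + 1), π (m - k) (n + k + 1) * m1 * γ * (1 - γ) ^ k := by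
  have f_succ (p : ℕ) : f (p + 1) * (m2 + (p + 1) * θ) =
      f p * ((m1 + (if 1 ≤ p then m2 else 0) + p * θ) * (1 - γ)) := by
    have key := prod_Icc_succ_div_mul
      (fun i : ℕ => (m1 + (if 1 < i then m2 else 0) + ((i : ℝ) - 1) * θ) * (1 - γ))
      (fun i : ℕ => m2 + (i : ℝ) * θ) p (by positivity)
    simpa only [← hf, Nat.cast_add_one, add_sub_cancel_right, Nat.lt_add_left_iff_pos,
      Nat.pos_iff_ne_zero, Nat.one_le_iff_ne_zero] using key
  have g_succ (N : ℕ) : g (N + 1) * (m1 + m2 + (N + 1) * θ) = g N * (l1 + l2) := by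
    simpa only [← hg, Nat.cast_add_one] using prod_Icc_succ_div_mul (fun _ => l1 + l2)
      (fun i : ℕ => m1 + m2 + (i : ℝ) * θ) N (by positivity)
  intro m n hm hn
  have f_zero : f 0 = 1 := by simp [hf]
  have boundary := mul_apply_eq_mul_geomConv f (1 - γ) m1 m2 θ f_zero
    (by simpa [f_zero] using f_succ 0) (fun p hp => by simpa [hp] using f_succ p) m hm
  obtain ⟨n, rfl⟩ : ∃ n', n = n' + 1 := ⟨n - 1, by omega⟩
  have reneging : ∑ k ∈ range (m + 1), π (m - k) (n + 1 + k + 1) * m1 * γ * (1 - γ) ^ k =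
      g (m + n + 1 + 1) * γ * (m1 * geomConv f (1 - γ) m) := by
    rw [geomConv, mul_sum, mul_sum]
    refine sum_congr rfl fun k hk => ?_
    rw [hπ, show m - k + (n + 1 + k + 1) = m + n + 1 + 1 by grind]
    ring
  rw [reneging, ← boundary]
  simp only [hπ, Nat.add_sub_cancel, ← add_assoc, show m + 1 + n = m + n + 1 by omega]
  have f_step := f_succ m
  have g_step := g_succ (m + n)
  have g_step' := g_succ (m + n + 1)
  rw [if_pos hm] at f_step
  push_cast at g_step g_step' ⊢
  linear_combination (-g (m + n + 1 + 1)) * f_step + f m * g_step - f m * g_step'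

theorem stmt_14 (l1 l2 m1 m2 θ : ℝ) (hl1 : 0 < l1) (hl2 : 0 < l2) (hm1 : 0 < m1)
    (hm2 : 0 < m2) (hθ : 0 < θ) (γ : ℝ) (hγ : γ = l1 / (l1 + l2))
    (f g : ℕ → ℝ)
    (hf : ∀ m : ℕ, f m = ∏ i ∈ Finset.Icc 1 m,
      ((m1 + (if 1 < i then m2 else 0) + ((i : ℝ) - 1) * θ) * (1 - γ)) /
        (m2 + (i : ℝ) * θ))
    (hg : ∀ n : ℕ, g n = ∏ i ∈ Finset.Icc 1 n, (l1 + l2) / (m1 + m2 + (i : ℝ) * θ))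
    (π : ℕ → ℕ → ℝ) (hπ : ∀ m n : ℕ, π m n = f m * g (m + n)) :
    ∀ m n : ℕ, 1 ≤ m → 1 ≤ n →
      π m n * (m1 + m2 + l1 + l2 + ((m : ℝ) + n) * θ) =
        π m (n + 1) * ((n : ℝ) + 1) * θ + π (m + 1) n * (m2 + ((m : ℝ) + 1) * θ) +
          π m (n - 1) * (l1 + l2) +
          ∑ k ∈ Finset.range (m + 1), π (m - k) (n + k + 1) * m1 * γ * (1 - γ) ^ k :=
  stmt_14_general l1 l2 m1 m2 θ hm1 hm2 hθ γ f g hf hg π hπ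
end

section
/- Let λ₁, λ₂, μ₁, μ₂, θ_s, θ_d > 0, γ_s = λ₁/(λ₁+λ₂), and define π^L_{m,n} = P^L_{m+n}·S^L_m with P^L_n = ∏_{i=1}^{n} (λ₁+λ₂)/(μ₁+μ₂+i·θ_s) and S^L_m = ∏_{i=1}^{m} ((μ₁+μ₂·[i>1]+(i-1)θ_s)(1-γ_s))/(μ₂+i·θ_s), and q_{m,1} = (∏_{k=1}^{m} λ₂/(μ₂+k·θ_s))·(μ₁/(λ₁+θ_d)). Then for all m ≥ 1, q_{m,1}·(λ₁+θ_d) = π^L_{m,0}·μ₁ + ∑_{k=1}^{m} π^L_{m-k,k}·μ₁·(1-γ_s)^k. -/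
/-!
Let `W_j` (`renegingWeight`) be `S^L_j` without its factors `1 - γ_s`, `b i = μ₂ + i θ_s` and
`c i = b i + μ₁`.
Every term `π^L_{m-k,k} (1 - γ_s)^k` equals `P^L_m (1 - γ_s)^m W_{m-k}`, so the right-hand side is
`μ₁ P^L_m (1 - γ_s)^m ∑_{j ≤ m} W_j`. The numerators of `W_{j+1}` are `μ₁, c 1, …, c j`, hence
`W_{j+1} = (c - b)(j+1) ∏_{i ≤ j} c i / ∏_{i ≤ j+1} b i` is the increment of `∏_{i ≤ j} c i / b i`,
and the sum telescopes to `∏_{i ≤ m} c i / b i`. This cancels the denominator of `P^L_m`, leaving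
`μ₁ λ₂^m / ∏_{i ≤ m} b i = q_{m,1} (λ₁ + θ_d)`.
-/

open Finset

theorem sum_range_telescope_prod_Icc_div {K : Type*} [Field K] (b c : ℕ → K)
    (hb : ∀ i, b i ≠ 0) (m : ℕ) :
    ∑ j ∈ range m, (c (j + 1) - b (j + 1)) * (∏ i ∈ Icc 1 j, c i) / ∏ i ∈ Icc 1 (j + 1), b i =
      (∏ i ∈ Icc 1 m, c i) / (∏ i ∈ Icc 1 m, b i) - 1 := by
  have hB : ∀ j, ∏ i ∈ Icc 1 j, b i ≠ 0 := fun j => prod_ne_zero_iff.2 fun i _ => hb i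
  have := sum_range_sub (fun j => (∏ i ∈ Icc 1 j, c i) / ∏ i ∈ Icc 1 j, b i) m
  simp only [Icc_eq_empty_of_lt zero_lt_one, prod_empty, div_one] at this
  rw [← this]
  refine sum_congr rfl fun j _ => ?_
  rw [prod_Icc_succ_top (by omega), prod_Icc_succ_top (by omega)]
  field_simp [hB j, hb (j + 1)]

theorem prod_Icc_succ_reneging_numerator {R : Type*} [CommRing R] (a b t : R) (j : ℕ) :
    ∏ i ∈ Icc 1 (j + 1), (a + (if 1 < i then b else 0) + ((i : R) - 1) * t) =
      a * ∏ i ∈ Icc 1 j, (a + b + (i : R) * t) := by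
  induction j with
  | zero => simp
  | succ j ih =>
    rw [prod_Icc_succ_top (by omega), ih, prod_Icc_succ_top (by omega), if_pos (by omega)]
    push_cast
    ring

theorem add_sum_Icc_one_eq_sum_range {M : Type*} [AddCommMonoid M] (f : ℕ → M) (m : ℕ) :
    f 0 + ∑ k ∈ Icc 1 m, f k = ∑ k ∈ range (m + 1), f k := by
  rw [range_eq_Ico, sum_eq_sum_Ico_succ_bot (by omega), Ico_add_one_right_eq_Icc]

def renegingWeight {K : Type*} [Field K] (μ₁ μ₂ θ : K) (m : ℕ) : K :=
  ∏ i ∈ Icc 1 m, (μ₁ + (if 1 < i then μ₂ else 0) + ((i : K) - 1) * θ) / (μ₂ + i * θ)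

section
variable {K : Type*} [Field K] {μ₁ μ₂ θ : K}

theorem renegingWeight_mul_pow (r : K) (m : ℕ) :
    renegingWeight μ₁ μ₂ θ m * r ^ m =
      ∏ i ∈ Icc 1 m, (μ₁ + (if 1 < i then μ₂ else 0) + ((i : K) - 1) * θ) * r / (μ₂ + i * θ) := by
  simp only [renegingWeight, mul_div_right_comm _ r]
  rw [← prod_mul_pow_card, Nat.card_Icc, add_tsub_cancel_right]

theorem renegingWeight_succ (j : ℕ) :
    renegingWeight μ₁ μ₂ θ (j + 1) =
      μ₁ * (∏ i ∈ Icc 1 j, (μ₁ + μ₂ + i * θ)) / ∏ i ∈ Icc 1 (j + 1), (μ₂ + i * θ) := by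
  rw [renegingWeight, prod_div_distrib, prod_Icc_succ_reneging_numerator]

theorem sum_range_renegingWeight (h : ∀ i : ℕ, μ₂ + i * θ ≠ 0) (m : ℕ) :
    ∑ j ∈ range (m + 1), renegingWeight μ₁ μ₂ θ j =
      (∏ i ∈ Icc 1 m, (μ₁ + μ₂ + i * θ)) / ∏ i ∈ Icc 1 m, (μ₂ + i * θ) := by
  rw [sum_range_succ', ← sub_add_cancel (_ / _) (1 : K),
    ← sum_range_telescope_prod_Icc_div _ (fun i : ℕ => μ₁ + μ₂ + i * θ) h]
  simp only [renegingWeight_succ]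
  simp [renegingWeight]

end

theorem stmt_15 (l1 l2 m1 m2 θs θd : ℝ) (hl1 : 0 < l1) (hl2 : 0 < l2) (hm1 : 0 < m1)
    (hm2 : 0 < m2) (hθs : 0 < θs) (hθd : 0 < θd)
    (γs : ℝ) (hγs : γs = l1 / (l1 + l2))
    (P S : ℕ → ℝ)
    (hP : ∀ n : ℕ, P n = ∏ i ∈ Finset.Icc 1 n, (l1 + l2) / (m1 + m2 + (i : ℝ) * θs))
    (hS : ∀ m : ℕ, S m = ∏ i ∈ Finset.Icc 1 m,
      ((m1 + (if 1 < i then m2 else 0) + ((i : ℝ) - 1) * θs) * (1 - γs)) /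
        (m2 + (i : ℝ) * θs))
    (πL : ℕ → ℕ → ℝ) (hπL : ∀ m n : ℕ, πL m n = P (m + n) * S m)
    (q : ℕ → ℝ)
    (hq : ∀ m : ℕ, q m =
      (∏ k ∈ Finset.Icc 1 m, l2 / (m2 + (k : ℝ) * θs)) * (m1 / (l1 + θd))) :
    ∀ m : ℕ, 1 ≤ m →
      q m * (l1 + θd) =
        πL m 0 * m1 + ∑ k ∈ Finset.Icc 1 m, πL (m - k) k * m1 * (1 - γs) ^ k := by
  intro m _
  have hb : ∀ i : ℕ, m2 + i * θs ≠ 0 := fun i => by positivity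
  have hterm : ∀ k ∈ range (m + 1), πL (m - k) k * m1 * (1 - γs) ^ k =
      P m * m1 * (1 - γs) ^ m * renegingWeight m1 m2 θs (m - k) := fun k hk => by
    have hkm : k ≤ m := mem_range_succ_iff.1 hk
    have hpow : (1 - γs) ^ m = (1 - γs) ^ (m - k) * (1 - γs) ^ k := by
      rw [← pow_add, Nat.sub_add_cancel hkm]
    rw [hπL, Nat.sub_add_cancel hkm, hS, ← renegingWeight_mul_pow, hpow]
    ring
  calc q m * (l1 + θd)
      = P m * m1 * (1 - γs) ^ m * ∑ j ∈ range (m + 1), renegingWeight m1 m2 θs j := by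
        have hr : 1 - γs = l2 / (l1 + l2) := by rw [hγs]; field_simp; ring
        have hC : ∏ i ∈ Icc 1 m, (m1 + m2 + i * θs) ≠ 0 :=
          prod_ne_zero_iff.2 fun i _ => by positivity
        have hB : ∏ i ∈ Icc 1 m, (m2 + i * θs) ≠ 0 := prod_ne_zero_iff.2 fun i _ => hb i
        have hA : l1 + l2 ≠ 0 := by positivity
        rw [sum_range_renegingWeight hb, hP, hq, hr, prod_div_distrib, prod_div_distrib,
          prod_const, prod_const, Nat.card_Icc, add_tsub_cancel_right, div_pow]
        generalize ∏ i ∈ Icc 1 m, (m1 + m2 + i * θs) = C at hC ⊢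
        generalize ∏ i ∈ Icc 1 m, (m2 + i * θs) = B at hB ⊢
        field_simp
    _ = ∑ k ∈ range (m + 1), πL (m - k) k * m1 * (1 - γs) ^ k := by
        rw [sum_congr rfl hterm, ← mul_sum, ← sum_range_reflect]
        simp
    _ = πL m 0 * m1 + ∑ k ∈ Icc 1 m, πL (m - k) k * m1 * (1 - γs) ^ k := by
        rw [← add_sum_Icc_one_eq_sum_range (fun k => πL (m - k) k * m1 * (1 - γs) ^ k)]
        simp
end
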